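/- Let N ∈ ℕ, r ∈ ℝ, T > 0, σ : Fin N → ℝ, S_{·,0} : Fin N → ℝ with S_{i,0} > 0 for all i, and let D be a symmetric positive-definite N×N real matrix with unit diagonal (D_{ii} = 1 for all i). Let μ_D be the probability measure on ℝ^N with density x ↦ ((2π)^N·det D)^(−1/2)·exp(−⟨x, D⁻¹x⟩/2) with respect to Lebesgue measure, and define the N-dimensional lognormal price S_i(x) = S_{i,0}·exp((r − σ_i²/2)·T + σ_i·√T·x_i). Then for every m ∈ Fin N and every measurable g : (Fin N → ℝ) → ℝ that is nonnegative or such that both sides are integrable, ∫ S_m(x)·g(S(x)) dμ_D(x) = S_{m,0}·exp(r·T)·∫ g( i ↦ ξ_{mi}·S_i(x) ) dμ_D(x), where ξ_{mi} = exp(σ_i·σ_m·D_{im}·T). (Girsanov-type transform for linear derivatives on N correlated lognormal assets.) -/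

import Mathlib

open MeasureTheory ProbabilityTheory

/-- The centered Gaussian measure on `ℝ^N` with covariance (correlation) matrix `D`,
given by the density `x ↦ ((2π)^N · det D)^(−1/2) · exp(−⟨x, D⁻¹x⟩/2)` w.r.t.
Lebesgue measure. -/
noncomputable def gaussD {N : ℕ} (D : Matrix (Fin N) (Fin N) ℝ) : Measure (Fin N → ℝ) :=
  (volume : Measure (Fin N → ℝ)).withDensity fun x =>
    ENNReal.ofReal ((((2 * Real.pi) ^ N * D.det) ^ (-(1 : ℝ) / 2)) *
      Real.exp (-(dotProduct x (Matrix.mulVec D⁻¹ x)) / 2))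

/-!
Cameron–Martin for the density of `gaussD D`: since
`⟨y + Dc, D⁻¹(y + Dc)⟩ = ⟨y, D⁻¹y⟩ + 2⟨c, y⟩ + ⟨c, Dc⟩`, translating Lebesgue measure by `Dc`
gives `∫ e^{⟨c,x⟩} h(x) dμ_D = e^{⟨c,Dc⟩/2} ∫ h(x + Dc) dμ_D` for every `h`.
The weight `S_m` is `S_{m,0} e^{(r - σ_m²/2)T} e^{⟨c,x⟩}` with `c = σ_m √T e_m`; then
`⟨c, Dc⟩ = σ_m² T` because `D_{mm} = 1`, and the shift `x ↦ x + Dc` multiplies each `S_i`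
by `ξ_{mi}`.
-/

open Matrix Real

theorem Matrix.dotProduct_inv_mulVec_add_mulVec {n R : Type*} [Fintype n] [DecidableEq n]
    [CommRing R] {D : Matrix n n R} (hsymm : D.IsSymm) (hdet : IsUnit D.det) (y c : n → R) :
    (y + D *ᵥ c) ⬝ᵥ D⁻¹ *ᵥ (y + D *ᵥ c) = y ⬝ᵥ D⁻¹ *ᵥ y + 2 * (c ⬝ᵥ y) + c ⬝ᵥ D *ᵥ c := by
  have hinv : D⁻¹ *ᵥ (D *ᵥ c) = c := by
    rw [mulVec_mulVec, nonsing_inv_mul D hdet, one_mulVec]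
  have hcross : D *ᵥ c ⬝ᵥ D⁻¹ *ᵥ y = c ⬝ᵥ y := by
    rw [dotProduct_mulVec, ← mulVec_transpose, transpose_nonsing_inv, hsymm.eq, hinv]
  rw [mulVec_add, hinv, add_dotProduct, dotProduct_add, dotProduct_add, hcross,
    dotProduct_comm y c, dotProduct_comm (D *ᵥ c) c]
  ring

section GaussianDensity

variable {N : ℕ} {D : Matrix (Fin N) (Fin N) ℝ}

noncomputable def gaussDensity (D : Matrix (Fin N) (Fin N) ℝ) (x : Fin N → ℝ) : ℝ :=
  ((2 * π) ^ N * D.det) ^ (-(1 : ℝ) / 2) * exp (-(x ⬝ᵥ D⁻¹ *ᵥ x) / 2)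

theorem gaussD_eq_withDensity :
    gaussD D = volume.withDensity fun x => ENNReal.ofReal (gaussDensity D x) :=
  rfl

theorem continuous_gaussDensity : Continuous (gaussDensity D) := by
  unfold gaussDensity
  fun_prop

theorem gaussDensity_nonneg (hdet : 0 < D.det) (x : Fin N → ℝ) : 0 ≤ gaussDensity D x := by
  unfold gaussDensity
  positivity

theorem integral_gaussD (hdet : 0 < D.det) (h : (Fin N → ℝ) → ℝ) :
    ∫ x, h x ∂gaussD D = ∫ x, gaussDensity D x * h x := by
  rw [gaussD_eq_withDensity, integral_withDensity_eq_integral_toReal_smul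
    continuous_gaussDensity.measurable.ennreal_ofReal
    (.of_forall fun _ => ENNReal.ofReal_lt_top)]
  simp only [ENNReal.toReal_ofReal (gaussDensity_nonneg hdet _), smul_eq_mul]

theorem gaussDensity_add_mulVec (hsymm : D.IsSymm) (hdet : IsUnit D.det) (y c : Fin N → ℝ) :
    gaussDensity D (y + D *ᵥ c) = exp (-(c ⬝ᵥ y) - c ⬝ᵥ D *ᵥ c / 2) * gaussDensity D y := by
  unfold gaussDensity
  rw [dotProduct_inv_mulVec_add_mulVec hsymm hdet, mul_left_comm, ← exp_add]
  ring_nf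

theorem integral_exp_dotProduct_mul_gaussD (hD : D.PosDef) (c : Fin N → ℝ)
    (h : (Fin N → ℝ) → ℝ) :
    ∫ x, exp (c ⬝ᵥ x) * h x ∂gaussD D = exp (c ⬝ᵥ D *ᵥ c / 2) * ∫ x, h (x + D *ᵥ c) ∂gaussD D := by
  have hsymm : D.IsSymm := isHermitian_iff_isSymm.mp hD.isHermitian
  have hdet : 0 < D.det := hD.det_pos
  rw [integral_gaussD hdet, integral_gaussD hdet, ← integral_add_right_eq_self _ (D *ᵥ c),
    ← integral_const_mul]
  congr 1
  funext y
  have hexp : exp (-(c ⬝ᵥ y) - c ⬝ᵥ D *ᵥ c / 2) * exp (c ⬝ᵥ y + c ⬝ᵥ D *ᵥ c)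
      = exp (c ⬝ᵥ D *ᵥ c / 2) := by
    rw [← exp_add]
    ring_nf
  rw [gaussDensity_add_mulVec hsymm hdet.ne'.isUnit, dotProduct_add]
  linear_combination (gaussDensity D y * h (y + D *ᵥ c)) * hexp

end GaussianDensity

theorem multidim_girsanov_transform_general
    (N : ℕ) (r T : ℝ) (hT : 0 < T)
    (σ : Fin N → ℝ) (S₀ : Fin N → ℝ)
    (D : Matrix (Fin N) (Fin N) ℝ) (hD : D.PosDef) (hDdiag : ∀ i, D i i = 1)
    (S : Fin N → (Fin N → ℝ) → ℝ)
    (hS : ∀ i x, S i x =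
      S₀ i * Real.exp ((r - (σ i) ^ 2 / 2) * T + σ i * Real.sqrt T * x i))
    (ξ : Fin N → Fin N → ℝ)
    (hξ : ∀ m i, ξ m i = Real.exp (σ i * σ m * D i m * T))
    (m : Fin N)
    (g : (Fin N → ℝ) → ℝ) :
    ∫ x, S m x * g (fun i => S i x) ∂(gaussD D) =
      S₀ m * Real.exp (r * T) * ∫ x, g (fun i => ξ m i * S i x) ∂(gaussD D) := by
  set c : Fin N → ℝ := Pi.single m (σ m * √T)
  have hTT : √T * √T = T := mul_self_sqrt hT.le
  have hDc : ∀ i, (D *ᵥ c) i = D i m * (σ m * √T) := fun i => dotProduct_single _ _ _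
  have hcDc : c ⬝ᵥ D *ᵥ c = σ m ^ 2 * T := by
    rw [single_dotProduct, hDc, hDdiag]
    linear_combination σ m ^ 2 * hTT
  have hSm : ∀ x, S m x = S₀ m * exp ((r - σ m ^ 2 / 2) * T) * exp (c ⬝ᵥ x) := fun x => by
    rw [hS, single_dotProduct, exp_add]
    ring
  have hshift : ∀ x, (fun i => S i (x + D *ᵥ c)) = fun i => ξ m i * S i x := fun x => by
    funext i
    rw [hS, hS, hξ, mul_left_comm, ← exp_add, Pi.add_apply, hDc]
    congr 2
    linear_combination (σ i * σ m * D i m) * hTT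
  simp_rw [hSm, mul_assoc, integral_const_mul, integral_exp_dotProduct_mul_gaussD hD, hshift, hcDc,
    ← mul_assoc (exp _), ← exp_add]
  ring_nf

theorem multidim_girsanov_transform
    (N : ℕ) (r T : ℝ) (hT : 0 < T)
    (σ : Fin N → ℝ) (S₀ : Fin N → ℝ) (hS₀ : ∀ i, 0 < S₀ i)
    (D : Matrix (Fin N) (Fin N) ℝ) (hD : D.PosDef) (hDdiag : ∀ i, D i i = 1)
    (S : Fin N → (Fin N → ℝ) → ℝ)
    (hS : ∀ i x, S i x =
      S₀ i * Real.exp ((r - (σ i) ^ 2 / 2) * T + σ i * Real.sqrt T * x i))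
    (ξ : Fin N → Fin N → ℝ)
    (hξ : ∀ m i, ξ m i = Real.exp (σ i * σ m * D i m * T))
    (m : Fin N)
    (g : (Fin N → ℝ) → ℝ) (hg : Measurable g)
    (hgi : (∀ s, 0 ≤ g s) ∨
      (Integrable (fun x => S m x * g (fun i => S i x)) (gaussD D) ∧
        Integrable (fun x => g (fun i => ξ m i * S i x)) (gaussD D))) :
    ∫ x, S m x * g (fun i => S i x) ∂(gaussD D) =
      S₀ m * Real.exp (r * T) * ∫ x, g (fun i => ξ m i * S i x) ∂(gaussD D) :=
  multidim_girsanov_transform_general N r T hT σ S₀ D hD hDdiag S hS ξ hξ m g
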